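/- arXiv:2407.13395 — 6 statements merged into one kernel-verified Lean document; each statement's English description precedes it below -/
import Mathlib

section
/- Let X be a Hausdorff space, U ⊆ X both Fσ and Gδ in X, and A ⊆ U. If φ : U → A is a piecewise continuous retraction and g : (X \ U) → A is continuous, then the map Φ : X → A defined by Φ(x) = φ(x) for x ∈ U and Φ(x) = g(x) for x ∈ X \ U is a piecewise continuous retraction of X onto A extending φ. -/
/-- A map is piecewise continuous if there is an increasing sequence of closed
subsets covering the domain on each of which the map is continuous. -/
def PiecewiseContinuous {X Y : Type*} [TopologicalSpace X] [TopologicalSpace Y]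
    (f : X → Y) : Prop :=
  ∃ S : ℕ → Set X, (∀ n, IsClosed (S n)) ∧ Monotone S ∧ (⋃ n, S n) = Set.univ ∧
    ∀ n, ContinuousOn f (S n)

/-- `A` is an Fσ set: a countable union of closed sets. -/
def IsFσ {X : Type*} [TopologicalSpace X] (A : Set X) : Prop :=
  ∃ F : ℕ → Set X, (∀ n, IsClosed (F n)) ∧ (⋃ n, F n) = A

/-!
Cover `U` by the closed sets of `X` cutting out the pieces of `φ`, intersected with an
increasing exhaustion of `U` by closed sets of `X` (which makes them closed in `X`), and cover
`X \ U`, an Fσ set because `U` is Gδ, by closed sets on which `Φ = g` is continuous. Pasting one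
set of each kind gives countably many closed sets covering `X` on each of which `Φ` is
continuous, and finite unions of these make the sequence increasing.
-/

open Set

section PiecewiseContinuous

variable {X Y : Type*} [TopologicalSpace X] [TopologicalSpace Y]

theorem IsGδ.isFσ_compl {s : Set X} (hs : IsGδ s) : IsFσ sᶜ := by
  obtain ⟨O, hO, rfl⟩ := isGδ_iff_eq_iInter_nat.1 hs
  exact ⟨fun n => (O n)ᶜ, fun n => (hO n).isClosed_compl, (compl_iInter O).symm⟩

theorem isClosed_accumulate {S : ℕ → Set X} (hS : ∀ n, IsClosed (S n)) (n : ℕ) :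
    IsClosed (accumulate S n) :=
  (finite_le_nat n).isClosed_biUnion fun k _ => hS k

theorem IsFσ.exists_monotone {s : Set X} (hs : IsFσ s) :
    ∃ F : ℕ → Set X, (∀ n, IsClosed (F n)) ∧ Monotone F ∧ (⋃ n, F n) = s := by
  obtain ⟨F, hF, rfl⟩ := hs
  exact ⟨accumulate F, isClosed_accumulate hF, monotone_accumulate, iUnion_accumulate⟩

theorem Continuous.piecewiseContinuous {f : X → Y} (hf : Continuous f) :
    PiecewiseContinuous f :=
  ⟨fun _ => univ, fun _ => isClosed_univ, monotone_const, iUnion_const _,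
    fun _ => hf.continuousOn⟩

theorem ContinuousOn.of_domRestrict {f : X → Y} {s t : Set X} (hts : t ⊆ s)
    (hf : ContinuousOn (s.domRestrict f) (Subtype.val ⁻¹' t)) : ContinuousOn f t := by
  rw [continuousOn_iff_continuous_domRestrict] at hf ⊢
  have hincl : Continuous fun x : t => (⟨⟨x, hts x.2⟩, x.2⟩ : Subtype.val ⁻¹' t) := by fun_prop
  exact hf.comp hincl

theorem continuousOn_accumulate {f : X → Y} {S : ℕ → Set X} (hS : ∀ n, IsClosed (S n))
    (hf : ∀ n, ContinuousOn f (S n)) (n : ℕ) : ContinuousOn f (accumulate S n) := by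
  induction n with
  | zero => simpa using hf 0
  | succ n ih =>
    rw [accumulate_succ]
    exact ih.union_of_isClosed (hf (n + 1)) (isClosed_accumulate hS n) (hS (n + 1))

theorem piecewiseContinuous_of_iUnion_eq_univ {f : X → Y} {S : ℕ → Set X}
    (hS : ∀ n, IsClosed (S n)) (hcover : (⋃ n, S n) = univ) (hf : ∀ n, ContinuousOn f (S n)) :
    PiecewiseContinuous f :=
  ⟨accumulate S, isClosed_accumulate hS, monotone_accumulate, iUnion_accumulate.trans hcover,
    continuousOn_accumulate hS hf⟩

theorem IsFσ.exists_isClosed_cover_of_piecewiseContinuous {f : X → Y} {s : Set X}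
    (hs : IsFσ s) (hf : PiecewiseContinuous (s.domRestrict f)) :
    ∃ T : ℕ → Set X, (∀ n, IsClosed (T n)) ∧ s ⊆ ⋃ n, T n ∧ ∀ n, ContinuousOn f (T n) := by
  obtain ⟨F, hF, hFmono, hFs⟩ := hs.exists_monotone
  obtain ⟨S, hS, hSmono, hScover, hfS⟩ := hf
  choose C hC hCS using fun n => isClosed_induced_iff.1 (hS n)
  refine ⟨fun n => C n ∩ F n, fun n => (hC n).inter (hF n), fun x hx => ?_, fun n => ?_⟩
  · obtain ⟨m, hm⟩ := mem_iUnion.1 (hScover.symm ▸ mem_univ (⟨x, hx⟩ : s))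
    obtain ⟨j, hj⟩ := mem_iUnion.1 (hFs.symm ▸ hx)
    have hxC : (⟨x, hx⟩ : s) ∈ Subtype.val ⁻¹' C (max m j) :=
      (hCS _).symm ▸ hSmono (le_max_left m j) hm
    exact mem_iUnion.2 ⟨max m j, hxC, hFmono (le_max_right m j) hj⟩
  · exact ContinuousOn.of_domRestrict (fun x hx => hFs ▸ mem_iUnion_of_mem n hx.2)
      ((hfS n).mono fun x hx => hCS n ▸ hx.1)

theorem piecewiseContinuous_of_domRestrict {f : X → Y} {s : Set X} (hs : IsFσ s)
    (hsc : IsFσ sᶜ) (hf : PiecewiseContinuous (s.domRestrict f))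
    (hfc : PiecewiseContinuous (sᶜ.domRestrict f)) : PiecewiseContinuous f := by
  obtain ⟨T, hT, hsT, hfT⟩ := hs.exists_isClosed_cover_of_piecewiseContinuous hf
  obtain ⟨T', hT', hsT', hfT'⟩ := hsc.exists_isClosed_cover_of_piecewiseContinuous hfc
  refine piecewiseContinuous_of_iUnion_eq_univ (fun n => (hT n).union (hT' n)) ?_
    fun n => (hfT n).union_of_isClosed (hfT' n) (hT n) (hT' n)
  rw [iUnion_union_distrib, ← univ_subset_iff, ← union_compl_self s]
  exact union_subset_union hsT hsT'

end PiecewiseContinuous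

theorem stmt2_general {X : Type*} [TopologicalSpace X] (U A : Set X)
    (hAU : A ⊆ U) (hFσ : IsFσ U) (hGδ : IsGδ U)
    (φ : U → A) (hφpc : PiecewiseContinuous φ)
    (hφretr : ∀ x (hx : x ∈ A), φ ⟨x, hAU hx⟩ = ⟨x, hx⟩)
    (g : (Uᶜ : Set X) → A) (hg : Continuous g)
    (Φ : X → A)
    (hΦ : ∀ x, (∀ h : x ∈ U, Φ x = φ ⟨x, h⟩) ∧ (∀ h : x ∈ Uᶜ, Φ x = g ⟨x, h⟩)) :
    (∀ a : A, Φ a = a) ∧ (∀ u : U, Φ u = φ u) ∧ PiecewiseContinuous Φ := by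
  have hΦU : U.domRestrict Φ = φ := domRestrict_eq_iff.2 fun x hx => (hΦ x).1 hx
  have hΦUc : Uᶜ.domRestrict Φ = g := domRestrict_eq_iff.2 fun x hx => (hΦ x).2 hx
  refine ⟨fun a => by rw [(hΦ a).1 (hAU a.2), hφretr a a.2], fun u => (hΦ u).1 u.2, ?_⟩
  exact piecewiseContinuous_of_domRestrict hFσ hGδ.isFσ_compl (hΦU ▸ hφpc)
    (hΦUc ▸ hg.piecewiseContinuous)

/-- If `U` is both Fσ and Gδ in a Hausdorff space `X`, `A ⊆ U`, `φ : U → A` is a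
piecewise continuous retraction and `g : X \ U → A` is continuous, then `Φ`
glued from `φ` and `g` is a piecewise continuous retraction of `X` onto `A`
extending `φ`. -/
theorem stmt2 {X : Type*} [TopologicalSpace X] [T2Space X] (U A : Set X)
    (hAU : A ⊆ U) (hFσ : IsFσ U) (hGδ : IsGδ U)
    (φ : U → A) (hφpc : PiecewiseContinuous φ)
    (hφretr : ∀ x (hx : x ∈ A), φ ⟨x, hAU hx⟩ = ⟨x, hx⟩)
    (g : (Uᶜ : Set X) → A) (hg : Continuous g)
    (Φ : X → A)
    (hΦ : ∀ x, (∀ h : x ∈ U, Φ x = φ ⟨x, h⟩) ∧ (∀ h : x ∈ Uᶜ, Φ x = g ⟨x, h⟩)) :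
    (∀ a : A, Φ a = a) ∧ (∀ u : U, Φ u = φ u) ∧ PiecewiseContinuous Φ :=
  stmt2_general U A hAU hFσ hGδ φ hφpc hφretr g hg Φ hΦ
end

section
/- Let X be a perfectly normal topological space, U ⊆ X open, and A ⊆ U a subset that is both Fσ and Gδ in X, with a fixed point a₀ ∈ A. If φ : U → A is a piecewise continuous retraction, then Φ : X → A defined by Φ(x) = φ(x) for x ∈ U and Φ(x) = a₀ for x ∈ X \ U is a piecewise continuous retraction of X onto A extending φ. -/
section

open Set Topology

variable {X Y : Type*} [TopologicalSpace X] [TopologicalSpace Y]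

theorem IsOpen.exists_monotone_isClosed_iUnion_eq [PerfectlyNormalSpace X] {U : Set X}
    (hU : IsOpen U) :
    ∃ F : ℕ → Set X, (∀ n, IsClosed (F n)) ∧ Monotone F ∧ ⋃ n, F n = U := by
  obtain ⟨V, hV, hVeq⟩ := isGδ_iff_eq_iInter_nat.1 hU.isClosed_compl.isGδ
  refine ⟨accumulate fun n ↦ (V n)ᶜ, fun n ↦ ?_, monotone_accumulate, ?_⟩
  · exact (finite_Iic n).isClosed_biUnion fun k _ ↦ (hV k).isClosed_compl
  · rw [iUnion_accumulate, ← compl_iInter, ← hVeq, compl_compl]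

theorem closure_image_val_inter_of_isClosed {U : Set X} {S : Set U} (hS : IsClosed S) :
    closure (Subtype.val '' S) ∩ U = Subtype.val '' S := by
  refine Subset.antisymm (fun x ⟨hxS, hxU⟩ ↦ ⟨⟨x, hxU⟩, ?_, rfl⟩) ?_
  · rw [← hS.closure_eq, IsInducing.subtypeVal.closure_eq_preimage_closure_image]
    exact hxS
  · exact subset_inter subset_closure (image_subset_range _ _ |>.trans Subtype.range_val.subset)

/-- The pieces are `Uᶜ ∪ (closure S n ∩ F n)` for pieces `S n` of `f` on `U` and an exhaustion of
`U` by closed sets `F n`: cutting by `F n` keeps them inside `U`, where taking the closure adds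
nothing. -/
theorem PiecewiseContinuous.of_domRestrict_of_continuousOn_compl [PerfectlyNormalSpace X]
    {f : X → Y} {U : Set X} (hU : IsOpen U) (hfU : PiecewiseContinuous (U.domRestrict f))
    (hfUc : ContinuousOn f Uᶜ) : PiecewiseContinuous f := by
  obtain ⟨F, hF, hFmono, hFU⟩ := hU.exists_monotone_isClosed_iUnion_eq
  obtain ⟨S, hS, hSmono, hScov, hfS⟩ := hfU
  have hFsub (n : ℕ) : F n ⊆ U := hFU ▸ subset_iUnion F n
  refine ⟨fun n ↦ Uᶜ ∪ (closure (Subtype.val '' S n) ∩ F n), fun n ↦ ?_, fun m n hmn ↦ ?_, ?_,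
    fun n ↦ ?_⟩
  · exact hU.isClosed_compl.union (isClosed_closure.inter (hF n))
  · exact union_subset_union_right _
      (inter_subset_inter (closure_mono (image_mono (hSmono hmn))) (hFmono hmn))
  · refine eq_univ_of_forall fun x ↦ ?_
    by_cases hx : x ∈ U
    · obtain ⟨m, hm⟩ := mem_iUnion.1 (hFU ▸ hx : x ∈ ⋃ n, F n)
      obtain ⟨k, hk⟩ := mem_iUnion.1 (hScov ▸ mem_univ _ : (⟨x, hx⟩ : U) ∈ ⋃ n, S n)
      refine mem_iUnion.2 ⟨max m k, Or.inr ⟨?_, hFmono (le_max_left m k) hm⟩⟩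
      exact subset_closure ⟨_, hSmono (le_max_right m k) hk, rfl⟩
    · exact mem_iUnion.2 ⟨0, Or.inl hx⟩
  · have hpiece : closure (Subtype.val '' S n) ∩ F n ⊆ Subtype.val '' S n :=
      (inter_subset_inter_right _ (hFsub n)).trans
        (closure_image_val_inter_of_isClosed (hS n)).subset
    refine hfUc.union_of_isClosed ?_ hU.isClosed_compl (isClosed_closure.inter (hF n))
    exact (IsInducing.subtypeVal.continuousOn_image_iff.2 (hfS n)).mono hpiece

end

theorem stmt3_general {X : Type*} [TopologicalSpace X] [PerfectlyNormalSpace X]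
    (U A : Set X) (hU : IsOpen U) (hAU : A ⊆ U)
    (a₀ : A)
    (φ : U → A) (hφpc : PiecewiseContinuous φ)
    (hφretr : ∀ x (hx : x ∈ A), φ ⟨x, hAU hx⟩ = ⟨x, hx⟩)
    (Φ : X → A)
    (hΦ : ∀ x, (∀ h : x ∈ U, Φ x = φ ⟨x, h⟩) ∧ (x ∉ U → Φ x = a₀)) :
    (∀ a : A, Φ a = a) ∧ (∀ u : U, Φ u = φ u) ∧ PiecewiseContinuous Φ := by
  have hΦU : U.domRestrict Φ = φ := funext fun u ↦ (hΦ u).1 u.2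
  refine ⟨fun a ↦ ?_, fun u ↦ (hΦ u).1 u.2, ?_⟩
  · rw [(hΦ a).1 (hAU a.2), hφretr a a.2]
  · refine .of_domRestrict_of_continuousOn_compl hU (hΦU ▸ hφpc) ?_
    exact continuousOn_const.congr fun x hx ↦ (hΦ x).2 hx

/-- If `X` is perfectly normal, `U ⊆ X` is open, `A ⊆ U` is both Fσ and Gδ in `X`
with a point `a₀ ∈ A`, and `φ : U → A` is a piecewise continuous retraction, then
`Φ` equal to `φ` on `U` and constantly `a₀` off `U` is a piecewise continuous
retraction of `X` onto `A` extending `φ`. -/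
theorem stmt3 {X : Type*} [TopologicalSpace X] [PerfectlyNormalSpace X]
    (U A : Set X) (hU : IsOpen U) (hAU : A ⊆ U)
    (hFσ : IsFσ A) (hGδ : IsGδ A) (a₀ : A)
    (φ : U → A) (hφpc : PiecewiseContinuous φ)
    (hφretr : ∀ x (hx : x ∈ A), φ ⟨x, hAU hx⟩ = ⟨x, hx⟩)
    (Φ : X → A)
    (hΦ : ∀ x, (∀ h : x ∈ U, Φ x = φ ⟨x, h⟩) ∧ (x ∉ U → Φ x = a₀)) :
    (∀ a : A, Φ a = a) ∧ (∀ u : U, Φ u = φ u) ∧ PiecewiseContinuous Φ :=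
  stmt3_general U A hU hAU a₀ φ hφpc hφretr Φ hΦ
end

section
/- Let Y be a nontrivial normed space, B = {x ∈ Y : ‖x‖ ≤ 1} the closed unit ball, and S = {x ∈ Y : ‖x‖ = 1} the unit sphere; fix t ∈ S. Then the map Φ : B → S defined by Φ(x) = x/‖x‖ for x ≠ 0 and Φ(0) = t is a piecewise continuous retraction of the closed unit ball onto the unit sphere, with witnessing closed sets X₀ = {0} ∪ {x ∈ B : ‖x‖ ≥ 1} and X_n = {0} ∪ {x ∈ B : ‖x‖ ≥ 1/n}. -/
/-! Each `Xₙ` is the union of the two closed sets `{0}` and `{x ∈ B | 1/(n+1) ≤ ‖x‖}`.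
On the first `Φ` is trivially continuous, on the second it agrees with `x ↦ ‖x‖⁻¹ • x`,
which is continuous away from `0`; a map continuous on two closed sets is continuous on
their union. -/

open Metric Set

def annulusWithZero {E : Type*} [SeminormedAddCommGroup E] (R r : ℝ) : Set E :=
  {0} ∪ {x ∈ closedBall (0 : E) R | r ≤ ‖x‖}

section Annulus

variable {E : Type*}

theorem isClosed_closedBall_sep_le_norm [SeminormedAddCommGroup E] (R r : ℝ) :
    IsClosed {x ∈ closedBall (0 : E) R | r ≤ ‖x‖} :=
  isClosed_closedBall.inter (isClosed_le continuous_const continuous_norm)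

theorem isClosed_annulusWithZero [NormedAddCommGroup E] (R r : ℝ) :
    IsClosed (annulusWithZero R r : Set E) :=
  isClosed_singleton.union (isClosed_closedBall_sep_le_norm R r)

theorem annulusWithZero_antitone [SeminormedAddCommGroup E] (R : ℝ) :
    Antitone (annulusWithZero R : ℝ → Set E) := by
  rintro r s hrs x (hx | ⟨hxR, hsx⟩)
  · exact Or.inl hx
  · exact Or.inr ⟨hxR, hrs.trans hsx⟩

theorem iUnion_annulusWithZero_one_div [NormedAddCommGroup E] {R : ℝ} (hR : 0 ≤ R) :
    ⋃ n : ℕ, annulusWithZero R (1 / (n + 1 : ℝ)) = closedBall (0 : E) R := by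
  refine Subset.antisymm (iUnion_subset fun n => union_subset ?_ inter_subset_left) ?_
  · exact singleton_subset_iff.2 (mem_closedBall_self hR)
  · intro x hxR
    rcases eq_or_ne x 0 with rfl | hx
    · exact mem_iUnion.2 ⟨0, Or.inl rfl⟩
    · obtain ⟨n, hn⟩ := exists_nat_one_div_lt (norm_pos_iff.2 hx)
      exact mem_iUnion.2 ⟨n, Or.inr ⟨hxR, hn.le⟩⟩

theorem continuousOn_annulusWithZero [NormedAddCommGroup E] [NormedSpace ℝ E] {Φ : E → E}
    (hΦ : ∀ x ≠ 0, Φ x = ‖x‖⁻¹ • x) {R r : ℝ} (hr : 0 < r) :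
    ContinuousOn Φ (annulusWithZero R r) := by
  have hne : ∀ x ∈ {x ∈ closedBall (0 : E) R | r ≤ ‖x‖}, ‖x‖ ≠ 0 := fun x hx =>
    (hr.trans_le hx.2).ne'
  have hcont : ContinuousOn Φ {x ∈ closedBall (0 : E) R | r ≤ ‖x‖} :=
    ((continuous_norm.continuousOn.inv₀ hne).smul continuousOn_id).congr fun x hx =>
      hΦ x (norm_ne_zero_iff.1 (hne x hx))
  exact (continuousOn_singleton Φ 0).union_of_isClosed hcont isClosed_singleton
    (isClosed_closedBall_sep_le_norm R r)

end Annulus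

theorem stmt5_general {Y : Type*} [NormedAddCommGroup Y] [NormedSpace ℝ Y]
    (t : Y) (ht : t ∈ Metric.sphere (0 : Y) 1)
    (Φ : Y → Y)
    (hΦ : ∀ x, (x ≠ 0 → Φ x = ‖x‖⁻¹ • x) ∧ (x = 0 → Φ x = t)) :
    (∀ x ∈ Metric.closedBall (0 : Y) 1, Φ x ∈ Metric.sphere (0 : Y) 1) ∧
    (∀ x ∈ Metric.sphere (0 : Y) 1, Φ x = x) ∧
    (∀ n : ℕ, IsClosed
      ({0} ∪ {x ∈ Metric.closedBall (0 : Y) 1 | 1 / (n + 1 : ℝ) ≤ ‖x‖})) ∧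
    Monotone (fun n : ℕ =>
      ({0} ∪ {x ∈ Metric.closedBall (0 : Y) 1 | 1 / (n + 1 : ℝ) ≤ ‖x‖} : Set Y)) ∧
    (⋃ n : ℕ, ({0} ∪ {x ∈ Metric.closedBall (0 : Y) 1 | 1 / (n + 1 : ℝ) ≤ ‖x‖} : Set Y))
      = Metric.closedBall (0 : Y) 1 ∧
    (∀ n : ℕ, ContinuousOn Φ
      ({0} ∪ {x ∈ Metric.closedBall (0 : Y) 1 | 1 / (n + 1 : ℝ) ≤ ‖x‖})) := by
  have hΦ₀ : ∀ x ≠ 0, Φ x = ‖x‖⁻¹ • x := fun x hx => (hΦ x).1 hx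
  refine ⟨fun x _ => ?_, fun x hx => ?_, fun _ => isClosed_annulusWithZero 1 _,
    fun _ _ hmn => annulusWithZero_antitone 1 (Nat.one_div_le_one_div hmn),
    iUnion_annulusWithZero_one_div zero_le_one,
    fun _ => continuousOn_annulusWithZero hΦ₀ (by positivity)⟩
  · rcases eq_or_ne x 0 with rfl | hx
    · exact (hΦ 0).2 rfl ▸ ht
    · exact hΦ₀ x hx ▸ mem_sphere_zero_iff_norm.2 (norm_smul_inv_norm hx)
  · have hx₁ : ‖x‖ = 1 := mem_sphere_zero_iff_norm.1 hx
    rw [hΦ₀ x (norm_ne_zero_iff.1 (hx₁ ▸ one_ne_zero)), hx₁, inv_one, one_smul]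

/-- The unit sphere of a nontrivial normed space is a piecewise continuous retract
of the closed unit ball: `Φ x = x / ‖x‖`, `Φ 0 = t`, maps the ball onto the sphere,
fixes the sphere, and the closed sets `Xₙ = {0} ∪ {x ∈ B : ‖x‖ ≥ 1/(n+1)}` form an
increasing cover of the ball on each of which `Φ` is continuous. -/
theorem stmt5 {Y : Type*} [NormedAddCommGroup Y] [NormedSpace ℝ Y] [Nontrivial Y]
    (t : Y) (ht : t ∈ Metric.sphere (0 : Y) 1)
    (Φ : Y → Y)
    (hΦ : ∀ x, (x ≠ 0 → Φ x = ‖x‖⁻¹ • x) ∧ (x = 0 → Φ x = t)) :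
    (∀ x ∈ Metric.closedBall (0 : Y) 1, Φ x ∈ Metric.sphere (0 : Y) 1) ∧
    (∀ x ∈ Metric.sphere (0 : Y) 1, Φ x = x) ∧
    (∀ n : ℕ, IsClosed
      ({0} ∪ {x ∈ Metric.closedBall (0 : Y) 1 | 1 / (n + 1 : ℝ) ≤ ‖x‖})) ∧
    Monotone (fun n : ℕ =>
      ({0} ∪ {x ∈ Metric.closedBall (0 : Y) 1 | 1 / (n + 1 : ℝ) ≤ ‖x‖} : Set Y)) ∧
    (⋃ n : ℕ, ({0} ∪ {x ∈ Metric.closedBall (0 : Y) 1 | 1 / (n + 1 : ℝ) ≤ ‖x‖} : Set Y))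
      = Metric.closedBall (0 : Y) 1 ∧
    (∀ n : ℕ, ContinuousOn Φ
      ({0} ∪ {x ∈ Metric.closedBall (0 : Y) 1 | 1 / (n + 1 : ℝ) ≤ ‖x‖})) :=
  stmt5_general t ht Φ hΦ
end

section
/- Let X be a normed space of dimension at least 2 and K⁰ = {x ∈ X : ‖x‖ < 1} the open unit ball. Define Φ : X → X by Φ(x) = (1 - ⌊‖x‖⌋/‖x‖)·x for x ≠ 0 and Φ(0) = 0. Then Φ maps X onto K⁰, satisfies Φ(x) = x for all x ∈ K⁰ (so it is a retraction onto K⁰), and is piecewise continuous: the closed sets B_{n,j} = {x : n ≤ ‖x‖ ≤ n + 1 - 1/j} (for n ≥ 0, j ≥ 1) cover X and Φ is continuous on each B_{n,j}. -/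
open Set Metric

theorem PiecewiseContinuous.of_iUnion₂ {X Y : Type*} [TopologicalSpace X] [TopologicalSpace Y]
    {f : X → Y} (S : ℕ → ℕ → Set X) (hclosed : ∀ n j, IsClosed (S n j))
    (hmono : ∀ n, Monotone (S n)) (hcover : ⋃ n, ⋃ j, S n j = univ)
    (hcont : ∀ n j, ContinuousOn f (S n j)) : PiecewiseContinuous f := by
  refine ⟨fun k => ⋃ i : Fin (k + 1), S i k, fun k => isClosed_iUnion_of_finite fun i =>
    hclosed i k, ?_, ?_, fun k => (locallyFinite_of_finite _).continuousOn_iUnion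
      (fun i => hclosed i k) fun i => hcont i k⟩
  · intro k l hkl x hx
    obtain ⟨⟨i, hik⟩, hi⟩ := mem_iUnion.1 hx
    exact mem_iUnion.2 ⟨⟨i, by omega⟩, hmono i hkl hi⟩
  · refine eq_univ_of_forall fun x => ?_
    obtain ⟨n, j, hx⟩ := mem_iUnion₂.1 (hcover ▸ mem_univ x)
    exact mem_iUnion.2 ⟨max n j, mem_iUnion.2 ⟨⟨n, by omega⟩, hmono n (le_max_right n j) hx⟩⟩

namespace FloorRetraction

variable {X : Type*} [NormedAddCommGroup X]

def shell (n j : ℕ) : Set X := {x : X | (n : ℝ) ≤ ‖x‖ ∧ ‖x‖ ≤ n + 1 - 1 / (j + 1)}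

theorem isClosed_shell (n j : ℕ) : IsClosed (shell n j : Set X) :=
  (isClosed_le continuous_const continuous_norm).inter
    (isClosed_le continuous_norm continuous_const)

theorem shell_mono (n : ℕ) : Monotone (shell n : ℕ → Set X) := by
  intro j k hjk x hx
  refine ⟨hx.1, hx.2.trans ?_⟩
  gcongr

theorem iUnion_shell : ⋃ n, ⋃ j, (shell n j : Set X) = univ := by
  refine eq_univ_of_forall fun x => mem_iUnion₂.2 ⟨⌊‖x‖⌋₊, ?_⟩
  obtain ⟨j, hj⟩ := exists_nat_one_div_lt (sub_pos.2 (Nat.lt_floor_add_one ‖x‖))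
  exact ⟨j, Nat.floor_le (norm_nonneg x), by linarith⟩

theorem floor_norm_eq_of_mem_shell {n j : ℕ} {x : X} (hx : x ∈ shell n j) :
    ⌊‖x‖⌋ = n := by
  have : (0 : ℝ) < 1 / (j + 1) := by positivity
  exact Int.floor_eq_iff.2 ⟨mod_cast hx.1, by push_cast; linarith [hx.2]⟩

variable [NormedSpace ℝ X]

-- No case split at `x = 0`: the formula gives `0` there since `0 / 0 = 0`.
noncomputable def floorRetraction (x : X) : X := (1 - (⌊‖x‖⌋ : ℝ) / ‖x‖) • x

theorem norm_floorRetraction (x : X) : ‖floorRetraction x‖ = Int.fract ‖x‖ := by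
  rcases eq_or_ne x 0 with rfl | hx
  · simp [floorRetraction]
  have hpos : 0 < ‖x‖ := norm_pos_iff.2 hx
  have hcoeff : 0 ≤ 1 - (⌊‖x‖⌋ : ℝ) / ‖x‖ := by
    rw [sub_nonneg, div_le_one hpos]
    exact Int.floor_le _
  rw [floorRetraction, norm_smul, Real.norm_of_nonneg hcoeff, sub_mul, one_mul,
    div_mul_cancel₀ _ hpos.ne', Int.self_sub_floor]

theorem floorRetraction_mem_ball (x : X) : floorRetraction x ∈ ball (0 : X) 1 := by
  rw [mem_ball_zero_iff, norm_floorRetraction]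
  exact Int.fract_lt_one _

theorem floorRetraction_of_mem_ball {x : X} (hx : x ∈ ball (0 : X) 1) :
    floorRetraction x = x := by
  rw [mem_ball_zero_iff] at hx
  simp [floorRetraction, Int.floor_eq_zero_iff.2 ⟨norm_nonneg x, hx⟩]

theorem continuousOn_floorRetraction_shell (n j : ℕ) :
    ContinuousOn (floorRetraction : X → X) (shell n j) := by
  rcases Nat.eq_zero_or_pos n with rfl | hn
  · refine continuousOn_id.congr fun x hx => ?_
    simp [floorRetraction, floor_norm_eq_of_mem_shell hx]
  have hne : ∀ x ∈ (shell n j : Set X), ‖x‖ ≠ 0 := fun x hx =>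
    (lt_of_lt_of_le (by exact_mod_cast hn) hx.1).ne'
  have hcont : ContinuousOn (fun x : X => (1 - (n : ℝ) / ‖x‖) • x) (shell n j) :=
    (continuousOn_const.sub (continuousOn_const.div continuous_norm.continuousOn hne)).smul
      continuousOn_id
  refine hcont.congr fun x hx => ?_
  simp [floorRetraction, floor_norm_eq_of_mem_shell hx]

end FloorRetraction

open FloorRetraction in
theorem stmt6_general {X : Type*} [NormedAddCommGroup X] [NormedSpace ℝ X]
    (Φ : X → X)
    (hΦ : ∀ x, (x ≠ 0 → Φ x = (1 - (⌊‖x‖⌋ : ℝ) / ‖x‖) • x) ∧ (x = 0 → Φ x = 0)) :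
    (∀ x, Φ x ∈ Metric.ball (0 : X) 1) ∧
    (∀ y ∈ Metric.ball (0 : X) 1, ∃ x, Φ x = y) ∧
    (∀ x ∈ Metric.ball (0 : X) 1, Φ x = x) ∧
    (∀ n j : ℕ, IsClosed {x : X | (n : ℝ) ≤ ‖x‖ ∧ ‖x‖ ≤ n + 1 - 1 / (j + 1)}) ∧
    (⋃ n : ℕ, ⋃ j : ℕ, {x : X | (n : ℝ) ≤ ‖x‖ ∧ ‖x‖ ≤ n + 1 - 1 / (j + 1)})
      = Set.univ ∧
    (∀ n j : ℕ, ContinuousOn Φ {x : X | (n : ℝ) ≤ ‖x‖ ∧ ‖x‖ ≤ n + 1 - 1 / (j + 1)}) ∧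
    PiecewiseContinuous Φ := by
  obtain rfl : Φ = floorRetraction := funext fun x => by
    rcases eq_or_ne x 0 with rfl | hx
    · simp [(hΦ 0).2 rfl, floorRetraction]
    · exact (hΦ x).1 hx
  exact ⟨floorRetraction_mem_ball, fun y hy => ⟨y, floorRetraction_of_mem_ball hy⟩,
    fun _ => floorRetraction_of_mem_ball, isClosed_shell, iUnion_shell,
    continuousOn_floorRetraction_shell,
    .of_iUnion₂ shell isClosed_shell shell_mono iUnion_shell continuousOn_floorRetraction_shell⟩

/-- In a normed space of dimension at least 2, the map
`Φ x = (1 - ⌊‖x‖⌋/‖x‖) • x` (with `Φ 0 = 0`) is a piecewise continuous retraction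
of `X` onto the open unit ball `K⁰`: it maps `X` onto `K⁰`, fixes `K⁰` pointwise,
and the closed sets `B_{n,j} = {x : n ≤ ‖x‖ ≤ n + 1 - 1/(j+1)}` cover `X` and `Φ`
is continuous on each of them. -/
theorem stmt6 {X : Type*} [NormedAddCommGroup X] [NormedSpace ℝ X]
    (hdim : 2 ≤ Module.rank ℝ X)
    (Φ : X → X)
    (hΦ : ∀ x, (x ≠ 0 → Φ x = (1 - (⌊‖x‖⌋ : ℝ) / ‖x‖) • x) ∧ (x = 0 → Φ x = 0)) :
    (∀ x, Φ x ∈ Metric.ball (0 : X) 1) ∧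
    (∀ y ∈ Metric.ball (0 : X) 1, ∃ x, Φ x = y) ∧
    (∀ x ∈ Metric.ball (0 : X) 1, Φ x = x) ∧
    (∀ n j : ℕ, IsClosed {x : X | (n : ℝ) ≤ ‖x‖ ∧ ‖x‖ ≤ n + 1 - 1 / (j + 1)}) ∧
    (⋃ n : ℕ, ⋃ j : ℕ, {x : X | (n : ℝ) ≤ ‖x‖ ∧ ‖x‖ ≤ n + 1 - 1 / (j + 1)})
      = Set.univ ∧
    (∀ n j : ℕ, ContinuousOn Φ {x : X | (n : ℝ) ≤ ‖x‖ ∧ ‖x‖ ≤ n + 1 - 1 / (j + 1)}) ∧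
    PiecewiseContinuous Φ :=
  stmt6_general Φ hΦ
end

section
/- Let X be a Hausdorff space, A ⊆ X both Fσ and Gδ, and φ : X → A a piecewise continuous retraction. Then for every piecewise continuous function f : A → ℝ, the composition T_φ(f) = f ∘ φ : X → ℝ is piecewise continuous and extends f (i.e., (f ∘ φ)(a) = f(a) for all a ∈ A); moreover T_φ is linear and positive (f ≥ 0 implies T_φ(f) ≥ 0). -/
/- If `φ` is continuous on the closed pieces `S n` and `f` on the closed pieces `T n`, then
`f ∘ φ` is continuous on the closed pieces `S n ∩ φ⁻¹' (T n)`; these still increase and, both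
sequences being increasing, still cover. -/
theorem PiecewiseContinuous.comp {X Y Z : Type*} [TopologicalSpace X]
    [TopologicalSpace Y] [TopologicalSpace Z] {φ : X → Y} {f : Y → Z}
    (hφ : PiecewiseContinuous φ) (hf : PiecewiseContinuous f) :
    PiecewiseContinuous (fun x => f (φ x)) := by
  obtain ⟨S, hS_closed, hS_mono, hS_cover, hφ_cont⟩ := hφ
  obtain ⟨T, hT_closed, hT_mono, hT_cover, hf_cont⟩ := hf
  refine ⟨fun n => S n ∩ φ ⁻¹' T n, fun n => ?_, fun m n hmn => ?_, ?_, fun n => ?_⟩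
  · exact (hφ_cont n).preimage_isClosed_of_isClosed (hS_closed n) (hT_closed n)
  · exact Set.inter_subset_inter (hS_mono hmn) (Set.preimage_mono (hT_mono hmn))
  · rw [Set.iUnion_inter_of_monotone hS_mono fun _ _ h => Set.preimage_mono (hT_mono h),
      ← Set.preimage_iUnion, hS_cover, hT_cover, Set.preimage_univ, Set.univ_inter]
  · exact (hf_cont n).comp ((hφ_cont n).mono Set.inter_subset_left) fun _ hx => hx.2

theorem stmt8_general {X : Type*} [TopologicalSpace X] (A : Set X)
    (φ : X → A) (hφpc : PiecewiseContinuous φ) (hφretr : ∀ a : A, φ a = a) :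
    (∀ f : A → ℝ, PiecewiseContinuous f →
      PiecewiseContinuous (fun x : X => f (φ x)) ∧ (∀ a : A, f (φ a) = f a)) ∧
    (∀ (f g : A → ℝ) (c : ℝ) (x : X),
      (c • f + g) (φ x) = c * f (φ x) + g (φ x)) ∧
    (∀ f : A → ℝ, (∀ a, 0 ≤ f a) → ∀ x : X, 0 ≤ f (φ x)) :=
  ⟨fun f hf => ⟨hφpc.comp hf, fun a => congrArg f (hφretr a)⟩,
    fun _ _ _ _ => rfl, fun _ hf x => hf (φ x)⟩

/-- If `A` is both Fσ and Gδ in a Hausdorff space `X` and `φ : X → A` is a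
piecewise continuous retraction, then `T_φ f = f ∘ φ` is a positive linear
extension operator from piecewise continuous functions on `A` to piecewise
continuous functions on `X`. -/
theorem stmt8 {X : Type*} [TopologicalSpace X] [T2Space X] (A : Set X)
    (hFσ : IsFσ A) (hGδ : IsGδ A)
    (φ : X → A) (hφpc : PiecewiseContinuous φ) (hφretr : ∀ a : A, φ a = a) :
    (∀ f : A → ℝ, PiecewiseContinuous f →
      PiecewiseContinuous (fun x : X => f (φ x)) ∧ (∀ a : A, f (φ a) = f a)) ∧
    (∀ (f g : A → ℝ) (c : ℝ) (x : X),
      (c • f + g) (φ x) = c * f (φ x) + g (φ x)) ∧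
    (∀ f : A → ℝ, (∀ a, 0 ≤ f a) → ∀ x : X, 0 ≤ f (φ x)) :=
  stmt8_general A φ hφpc hφretr
end

section
/- If φ : X → Y and f : Y → Z are piecewise continuous maps between topological spaces, where X is covered by an increasing sequence of closed sets (X_n) witnessing piecewise continuity of φ and Y by closed sets (Y_m) witnessing piecewise continuity of f, and additionally each restriction φ|_{X_n} is continuous with φ(X_n ∩ φ⁻¹(Y_m)) ⊆ Y_m, then f ∘ φ is piecewise continuous provided the sets X_n ∩ φ⁻¹(Y_m) are closed in X. In particular, if φ : X → A is piecewise continuous with A ⊆ X both Fσ and Gδ in a Hausdorff space X, and f : A → ℝ is piecewise continuous, then f ∘ φ : X → ℝ is piecewise continuous. -/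
namespace PiecewiseContinuous

variable {X Y Z : Type*} [TopologicalSpace X] [TopologicalSpace Y] [TopologicalSpace Z]

theorem comp_of_isClosed_inter_preimage {φ : X → Y} {f : Y → Z} {Xn : ℕ → Set X}
    {Ym : ℕ → Set Y} (hXmono : Monotone Xn) (hXcov : ⋃ n, Xn n = Set.univ)
    (hφ : ∀ n, ContinuousOn φ (Xn n)) (hYmono : Monotone Ym)
    (hYcov : ⋃ m, Ym m = Set.univ) (hf : ∀ m, ContinuousOn f (Ym m))
    (hcl : ∀ n m, IsClosed (Xn n ∩ φ ⁻¹' Ym m)) :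
    PiecewiseContinuous (f ∘ φ) := by
  have hmono : Monotone fun n ↦ φ ⁻¹' Ym n := fun _ _ hab ↦ Set.preimage_mono (hYmono hab)
  refine ⟨fun n ↦ Xn n ∩ φ ⁻¹' Ym n, fun n ↦ hcl n n, hXmono.inter hmono, ?_, fun n ↦ ?_⟩
  · rw [Set.iUnion_inter_of_monotone hXmono hmono, ← Set.preimage_iUnion, hXcov, hYcov,
      Set.preimage_univ, Set.univ_inter]
  · exact (hf n).comp ((hφ n).mono Set.inter_subset_left) fun _ hx ↦ hx.2

protected theorem comp_s10 {φ : X → Y} {f : Y → Z} (hf : PiecewiseContinuous f)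
    (hφ : PiecewiseContinuous φ) : PiecewiseContinuous (f ∘ φ) := by
  obtain ⟨Xn, hXcl, hXmono, hXcov, hφn⟩ := hφ
  obtain ⟨Ym, hYcl, hYmono, hYcov, hfm⟩ := hf
  exact comp_of_isClosed_inter_preimage hXmono hXcov hφn hYmono hYcov hfm
    fun n m ↦ (hφn n).preimage_isClosed_of_isClosed (hXcl n) (hYcl m)

end PiecewiseContinuous

/-- Composition of piecewise continuous maps: if the witnessing closed covers
`(Xₙ)` of `φ` and `(Yₘ)` of `f` are such that each `Xₙ ∩ φ⁻¹(Yₘ)` is closed,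
then `f ∘ φ` is piecewise continuous. In particular, if `φ : X → A` is a
piecewise continuous retraction onto an Fσ- and Gδ-subset `A` of a Hausdorff
space and `f : A → ℝ` is piecewise continuous, then `f ∘ φ` is piecewise
continuous. -/
theorem stmt10 :
    (∀ (X Y Z : Type) [TopologicalSpace X] [TopologicalSpace Y] [TopologicalSpace Z]
      (φ : X → Y) (f : Y → Z) (Xn : ℕ → Set X) (Ym : ℕ → Set Y),
      (∀ n, IsClosed (Xn n)) → Monotone Xn → (⋃ n, Xn n) = Set.univ →
      (∀ n, ContinuousOn φ (Xn n)) →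
      (∀ m, IsClosed (Ym m)) → Monotone Ym → (⋃ m, Ym m) = Set.univ →
      (∀ m, ContinuousOn f (Ym m)) →
      (∀ n m, φ '' (Xn n ∩ φ ⁻¹' (Ym m)) ⊆ Ym m) →
      (∀ n m, IsClosed (Xn n ∩ φ ⁻¹' (Ym m))) →
      PiecewiseContinuous (f ∘ φ)) ∧
    (∀ (X : Type) [TopologicalSpace X] [T2Space X] (A : Set X),
      IsFσ A → IsGδ A →
      ∀ (φ : X → A), PiecewiseContinuous φ → (∀ a : A, φ a = a) →
      ∀ (f : A → ℝ), PiecewiseContinuous f → PiecewiseContinuous (f ∘ φ)) :=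
  ⟨fun _ _ _ _ _ _ _ _ _ _ _ hXmono hXcov hφ _ hYmono hYcov hf _ hcl ↦
      PiecewiseContinuous.comp_of_isClosed_inter_preimage hXmono hXcov hφ hYmono hYcov hf hcl,
    fun _ _ _ _ _ _ _ hφ _ _ hf ↦ hf.comp_s10 hφ⟩
end
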